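/- arXiv:1101.1426 — 9 statements merged into one kernel-verified Lean document; each statement's English description precedes it below -/
import Mathlib

section
/- Let P₀, …, Pₙ be the vertices of a regular n-dimensional simplex in ℝⁿ (all pairwise distances equal and positive). Then for any indices i ≠ j and k ≠ l, the angle between the lines P_iP_j and P_kP_l (i.e., the angle between the vectors P_i − P_j and P_k − P_l, taken in [0°, 90°] by identifying an angle with its supplement) is either 0°, 60°, or 90°. -/
/-!
Expanding ⟪Pᵢ - Pⱼ, Pₖ - Pₗ⟫ by polarization writes it as half an alternating sum of four
squared edge lengths, each `0` or `d²`; hence the cosine of the angle between two edges is `0`,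
`±1/2` or `±1`.
Folding the angle onto `[0, π/2]` replaces the cosine by its absolute value, leaving
`arccos 1 = 0`, `arccos (1/2) = π/3` and `arccos 0 = π/2`.
-/

open InnerProductGeometry Real
open scoped RealInnerProductSpace

theorem real_inner_sub_sub_eq_norm_sq {V : Type*} [NormedAddCommGroup V] [InnerProductSpace ℝ V]
    (a b c e : V) :
    ⟪a - b, c - e⟫ = (‖a - e‖ ^ 2 + ‖b - c‖ ^ 2 - ‖a - c‖ ^ 2 - ‖b - e‖ ^ 2) / 2 := by
  simp only [norm_sub_sq_real, inner_sub_left, inner_sub_right]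
  ring

theorem min_angle_pi_sub_angle {V : Type*} [NormedAddCommGroup V] [InnerProductSpace ℝ V]
    (u v : V) :
    min (angle u v) (π - angle u v) = arccos |cos (angle u v)| := by
  rw [cos_angle, angle, ← arccos_neg, ← antitone_arccos.map_max, abs_eq_max_neg]

section RegularSimplex

variable {ι V : Type*} [NormedAddCommGroup V] {P : ι → V} {d : ℝ}

theorem norm_sub_sq_eq_ite_of_dist_eq [DecidableEq ι] (hreg : ∀ i j, i ≠ j → dist (P i) (P j) = d)
    (i j : ι) : ‖P i - P j‖ ^ 2 = if i = j then 0 else d ^ 2 := by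
  split_ifs with h
  · simp [h]
  · rw [← dist_eq_norm, hreg i j h]

theorem abs_inner_sub_sub_mem_of_dist_eq [InnerProductSpace ℝ V]
    (hreg : ∀ i j, i ≠ j → dist (P i) (P j) = d)
    {i j k l : ι} (hij : i ≠ j) (hkl : k ≠ l) :
    |⟪P i - P j, P k - P l⟫| ∈ ({0, d ^ 2 / 2, d ^ 2} : Set ℝ) := by
  classical
  simp only [real_inner_sub_sub_eq_norm_sq, norm_sub_sq_eq_ite_of_dist_eq hreg]
  by_cases hik : i = k <;> by_cases hil : i = l <;> by_cases hjk : j = k <;>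
    by_cases hjl : j = l <;> simp_all <;> ring_nf <;> norm_num [abs_mul, abs_of_nonneg, sq_nonneg]

theorem abs_cos_angle_sub_sub_mem_of_dist_eq [InnerProductSpace ℝ V] (hd : d ≠ 0)
    (hreg : ∀ i j, i ≠ j → dist (P i) (P j) = d)
    {i j k l : ι} (hij : i ≠ j) (hkl : k ≠ l) :
    |cos (angle (P i - P j) (P k - P l))| ∈ ({0, 1 / 2, 1} : Set ℝ) := by
  rw [cos_angle, ← dist_eq_norm, ← dist_eq_norm, hreg i j hij, hreg k l hkl, abs_div, abs_mul_self]
  rcases abs_inner_sub_sub_mem_of_dist_eq hreg hij hkl with h | h | h <;> rw [h] <;>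
    field_simp <;> simp

end RegularSimplex

theorem arccos_mem_of_mem_zero_half_one {c : ℝ} (hc : c ∈ ({0, 1 / 2, 1} : Set ℝ)) :
    arccos c ∈ ({0, π / 3, π / 2} : Set ℝ) := by
  have arccos_half : arccos (1 / 2) = π / 3 := by
    rw [← cos_pi_div_three, arccos_cos (by positivity) (by linarith [pi_pos])]
  rcases hc with rfl | rfl | rfl <;>
    simp only [arccos_zero, arccos_half, arccos_one, Set.mem_insert_iff, Set.mem_singleton_iff,
      true_or, or_true]

theorem stmt0 (n : ℕ) (P : Fin (n + 1) → EuclideanSpace ℝ (Fin n)) (d : ℝ) (hd : 0 < d)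
    (hreg : ∀ i j : Fin (n + 1), i ≠ j → dist (P i) (P j) = d)
    (i j k l : Fin (n + 1)) (hij : i ≠ j) (hkl : k ≠ l) :
    min (angle (P i - P j) (P k - P l)) (π - angle (P i - P j) (P k - P l))
      ∈ ({0, π / 3, π / 2} : Set ℝ) := by
  rw [min_angle_pi_sub_angle]
  exact arccos_mem_of_mem_zero_half_one
    (abs_cos_angle_sub_sub_mem_of_dist_eq hd.ne' hreg hij hkl)
end

section
/- Let K ⊂ ℝⁿ be a nonempty compact set equal to the union S₀(K) ∪ … ∪ S_m(K), where each S_i is a homothety of ℝⁿ (a map x ↦ c_i + r_i(x − c_i) with ratio 0 < |r_i| < 1). Then for any distinct points x₀, x₁ ∈ K there exist indices i ≠ j and points y₀ ∈ S_i(K), y₁ ∈ S_j(K) such that y₀ − y₁ is a nonzero scalar multiple of x₀ − x₁. -/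
/-!
Among all pairs of points of `K` whose difference is parallel to `x₀ - x₁`, a pair at maximal
distance exists by compactness. If both of its points lay in the same piece `Sᵢ(K)`, pulling them
back by `Sᵢ` would give a parallel pair farther apart by the factor `1 / |rᵢ| > 1`; so the two
points lie in different pieces.
-/

/-- A homothety of ℝⁿ with center `c` and ratio `r`. -/
def IsHomothety {n : ℕ} (S : EuclideanSpace ℝ (Fin n) → EuclideanSpace ℝ (Fin n)) (r : ℝ) : Prop :=
  ∃ c : EuclideanSpace ℝ (Fin n), ∀ x, S x = c + r • (x - c)

open Submodule

theorem IsHomothety.sub_eq {n : ℕ} {S : EuclideanSpace ℝ (Fin n) → EuclideanSpace ℝ (Fin n)}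
    {r : ℝ} (h : IsHomothety S r) (x y : EuclideanSpace ℝ (Fin n)) :
    S x - S y = r • (x - y) := by
  obtain ⟨c, hc⟩ := h
  rw [hc, hc]
  module

section

variable {ι E : Type*} [NormedAddCommGroup E] [NormedSpace ℝ E] {K : Set E}

theorem IsCompact.prod_inter_setOf_sub_mem_span (hK : IsCompact K) (v : E) :
    IsCompact (K ×ˢ K ∩ {p : E × E | p.1 - p.2 ∈ ℝ ∙ v}) :=
  (hK.prod hK).inter_right <|
    (closed_of_finiteDimensional (ℝ ∙ v)).preimage (continuous_fst.sub continuous_snd)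

theorem exists_sub_mem_span_dist_lt_of_mem_image {S : E → E} {r : ℝ}
    (hS : ∀ x y, S x - S y = r • (x - y)) (hr : |r| < 1) {v x y : E} (hxy : x ≠ y)
    (hx : x ∈ S '' K) (hy : y ∈ S '' K) (hv : x - y ∈ ℝ ∙ v) :
    ∃ z₀ ∈ K, ∃ z₁ ∈ K, z₀ - z₁ ∈ ℝ ∙ v ∧ dist x y < dist z₀ z₁ := by
  obtain ⟨z₀, hz₀, rfl⟩ := hx
  obtain ⟨z₁, hz₁, rfl⟩ := hy
  have hsub : S z₀ - S z₁ = r • (z₀ - z₁) := hS z₀ z₁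
  have hr₀ : r ≠ 0 := by
    rintro rfl
    exact hxy (sub_eq_zero.mp (by simpa using hsub))
  refine ⟨z₀, hz₀, z₁, hz₁, ?_, ?_⟩
  · have : z₀ - z₁ = r⁻¹ • (S z₀ - S z₁) := by rw [hsub, inv_smul_smul₀ hr₀]
    exact this ▸ smul_mem _ _ hv
  · have hdist : dist (S z₀) (S z₁) = |r| * dist z₀ z₁ := by
      rw [dist_eq_norm, dist_eq_norm, hsub, norm_smul, Real.norm_eq_abs]
    have hpos : 0 < dist z₀ z₁ := by
      have := dist_pos.mpr hxy
      rw [hdist] at this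
      exact pos_of_mul_pos_right this (abs_nonneg r)
    rw [hdist]
    exact mul_lt_of_lt_one_left hpos hr

theorem exists_ne_mem_image_sub_mem_span (hK : IsCompact K) {S : ι → E → E} {r : ι → ℝ}
    (hS : ∀ i x y, S i x - S i y = r i • (x - y)) (hr : ∀ i, |r i| < 1)
    (hunion : K = ⋃ i, S i '' K) {x₀ x₁ : E} (hx₀ : x₀ ∈ K) (hx₁ : x₁ ∈ K) (hne : x₀ ≠ x₁) :
    ∃ i j, i ≠ j ∧ ∃ y₀ ∈ S i '' K, ∃ y₁ ∈ S j '' K, y₀ ≠ y₁ ∧ y₀ - y₁ ∈ ℝ ∙ (x₀ - x₁) := by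
  obtain ⟨⟨y₀, y₁⟩, ⟨⟨hy₀, hy₁⟩, hy⟩, hmax⟩ :=
    (hK.prod_inter_setOf_sub_mem_span (x₀ - x₁)).exists_isMaxOn
      ⟨(x₀, x₁), ⟨hx₀, hx₁⟩, mem_span_singleton_self _⟩
      (continuous_fst.dist continuous_snd).continuousOn
  have hy₀₁ : y₀ ≠ y₁ := by
    rintro rfl
    have := isMaxOn_iff.mp hmax (x₀, x₁) ⟨⟨hx₀, hx₁⟩, mem_span_singleton_self _⟩
    rw [dist_self, dist_le_zero] at this
    exact hne this
  rw [hunion, Set.mem_iUnion] at hy₀ hy₁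
  obtain ⟨i, hi⟩ := hy₀
  obtain ⟨j, hj⟩ := hy₁
  refine ⟨i, j, fun hij => ?_, y₀, hi, y₁, hj, hy₀₁, hy⟩
  subst hij
  obtain ⟨z₀, hz₀, z₁, hz₁, hz, hlt⟩ :=
    exists_sub_mem_span_dist_lt_of_mem_image (hS i) (hr i) hy₀₁ hi hj hy
  exact (isMaxOn_iff.mp hmax (z₀, z₁) ⟨⟨hz₀, hz₁⟩, hz⟩).not_gt hlt

end

theorem stmt2_general (n m : ℕ) (K : Set (EuclideanSpace ℝ (Fin n)))
    (hK : IsCompact K)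
    (S : Fin (m + 1) → EuclideanSpace ℝ (Fin n) → EuclideanSpace ℝ (Fin n))
    (r : Fin (m + 1) → ℝ)
    (hhom : ∀ i, IsHomothety (S i) (r i))
    (hr : ∀ i, 0 < |r i| ∧ |r i| < 1)
    (hunion : K = ⋃ i, S i '' K)
    (x₀ x₁ : EuclideanSpace ℝ (Fin n)) (hx₀ : x₀ ∈ K) (hx₁ : x₁ ∈ K) (hne' : x₀ ≠ x₁) :
    ∃ i j : Fin (m + 1), i ≠ j ∧ ∃ y₀ ∈ S i '' K, ∃ y₁ ∈ S j '' K,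
      ∃ t : ℝ, t ≠ 0 ∧ y₀ - y₁ = t • (x₀ - x₁) := by
  obtain ⟨i, j, hij, y₀, hy₀, y₁, hy₁, hy₀₁, hspan⟩ :=
    exists_ne_mem_image_sub_mem_span hK (fun i => (hhom i).sub_eq) (fun i => (hr i).2) hunion
      hx₀ hx₁ hne'
  obtain ⟨t, ht⟩ := mem_span_singleton.mp hspan
  refine ⟨i, j, hij, y₀, hy₀, y₁, hy₁, t, ?_, ht.symm⟩
  rintro rfl
  exact hy₀₁ (sub_eq_zero.mp (by simpa using ht.symm))

theorem stmt2 (n m : ℕ) (K : Set (EuclideanSpace ℝ (Fin n)))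
    (hne : K.Nonempty) (hK : IsCompact K)
    (S : Fin (m + 1) → EuclideanSpace ℝ (Fin n) → EuclideanSpace ℝ (Fin n))
    (r : Fin (m + 1) → ℝ)
    (hhom : ∀ i, IsHomothety (S i) (r i))
    (hr : ∀ i, 0 < |r i| ∧ |r i| < 1)
    (hunion : K = ⋃ i, S i '' K)
    (x₀ x₁ : EuclideanSpace ℝ (Fin n)) (hx₀ : x₀ ∈ K) (hx₁ : x₁ ∈ K) (hne' : x₀ ≠ x₁) :
    ∃ i j : Fin (m + 1), i ≠ j ∧ ∃ y₀ ∈ S i '' K, ∃ y₁ ∈ S j '' K,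
      ∃ t : ℝ, t ≠ 0 ∧ y₀ - y₁ = t • (x₀ - x₁) :=
  stmt2_general n m K hK S r hhom hr hunion x₀ x₁ hx₀ hx₁ hne'
end

section
/- Let f and g be homotheties of ℝⁿ with the same positive ratio product in both orders, and let P and Q be the fixed points of f∘g and g∘f respectively. If P ≠ Q and x, y are points with x − y nonzero and perpendicular to P − Q, then the four points f(g(x)), f(g(y)), g(f(y)), g(f(x)) form a (possibly degenerate only if x = y) rectangle; in particular, opposite sides are equal and parallel and adjacent sides are perpendicular. -/
section Module

variable {V : Type*} [AddCommGroup V] [Module ℝ V] {S T : V → V} {k : ℝ}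

lemma eq_add_smul_sub_of_sub_eq_smul (hS : ∀ a b, S a - S b = k • (a - b)) {P : V}
    (hP : S P = P) (a : V) : S a = P + k • (a - P) := by
  have h := hS a P
  rw [hP] at h
  rw [← h]
  abel

lemma sub_eq_one_sub_smul_of_sub_eq_smul (hS : ∀ a b, S a - S b = k • (a - b))
    (hT : ∀ a b, T a - T b = k • (a - b)) {P Q : V} (hP : S P = P) (hQ : T Q = Q) (a : V) :
    S a - T a = (1 - k) • (P - Q) := by
  rw [eq_add_smul_sub_of_sub_eq_smul hS hP, eq_add_smul_sub_of_sub_eq_smul hT hQ]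
  module

end Module

namespace IsHomothety

variable {n : ℕ} {f g : EuclideanSpace ℝ (Fin n) → EuclideanSpace ℝ (Fin n)} {rf rg : ℝ}

lemma sub_eq_s3 (hf : IsHomothety f rf) (a b : EuclideanSpace ℝ (Fin n)) :
    f a - f b = rf • (a - b) := by
  obtain ⟨c, hc⟩ := hf
  rw [hc, hc]
  module

lemma comp_sub_eq (hf : IsHomothety f rf) (hg : IsHomothety g rg)
    (a b : EuclideanSpace ℝ (Fin n)) : f (g a) - f (g b) = (rf * rg) • (a - b) := by
  rw [hf.sub_eq_s3, hg.sub_eq_s3, smul_smul]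

end IsHomothety

theorem stmt3 (n : ℕ) (f g : EuclideanSpace ℝ (Fin n) → EuclideanSpace ℝ (Fin n))
    (rf rg : ℝ) (hf : IsHomothety f rf) (hg : IsHomothety g rg)
    (hpos : 0 < rf * rg) (hne1 : rf * rg ≠ 1)
    (P Q : EuclideanSpace ℝ (Fin n)) (hP : f (g P) = P) (hQ : g (f Q) = Q) (hPQ : P ≠ Q)
    (x y : EuclideanSpace ℝ (Fin n)) (hxy : x ≠ y)
    (hperp : inner ℝ (x - y) (P - Q) = (0 : ℝ)) :
    f (g x) - f (g y) = g (f x) - g (f y) ∧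
      inner ℝ (f (g x) - f (g y)) (f (g y) - g (f y)) = (0 : ℝ) ∧
      f (g x) ≠ f (g y) ∧ f (g y) ≠ g (f y) := by
  set k := rf * rg
  have hfg : ∀ a b, f (g a) - f (g b) = k • (a - b) := hf.comp_sub_eq hg
  have hgf : ∀ a b, g (f a) - g (f b) = k • (a - b) := by
    simpa only [mul_comm rg rf] using hg.comp_sub_eq hf
  have hside : f (g y) - g (f y) = (1 - k) • (P - Q) :=
    sub_eq_one_sub_smul_of_sub_eq_smul hfg hgf hP hQ y
  refine ⟨by rw [hfg, hgf], ?_, ?_, ?_⟩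
  · rw [hfg, hside, real_inner_smul_left, real_inner_smul_right, hperp, mul_zero, mul_zero]
  · rw [← sub_ne_zero, hfg, smul_ne_zero_iff]
    exact ⟨hpos.ne', sub_ne_zero.mpr hxy⟩
  · rw [← sub_ne_zero, hside, smul_ne_zero_iff]
    exact ⟨sub_ne_zero.mpr hne1.symm, sub_ne_zero.mpr hPQ⟩
end

section
/- Fewer than continuum many proper algebraic subsets of ℝⁿ cannot cover a Borel (or Lebesgue measurable) set of positive n-dimensional Lebesgue measure. Equivalently: if 𝒜 is a family of proper algebraic subsets of ℝⁿ with |𝒜| < 𝔠 and B ⊆ ⋃𝒜 is measurable, then B has Lebesgue measure zero. -/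
open MeasureTheory

/-- A proper algebraic subset of ℝⁿ: the zero set of a nonzero polynomial. -/
def IsProperAlgebraic {n : ℕ} (A : Set (Fin n → ℝ)) : Prop :=
  ∃ p : MvPolynomial (Fin n) ℝ, p ≠ 0 ∧ A = {x | MvPolynomial.eval x p = 0}

/-!
Induction on `n`, splitting `x = (t, y)` with `t ∈ ℝ`. View each polynomial as a polynomial in `t`
whose coefficients are polynomials in `y`, and let `cᵢ ≠ 0` be its leading coefficient. For `y`
outside all zero sets of the `cᵢ`, the fibre `{t | (t, y) ∈ B}` lies in a union of fewer than `𝔠`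
finite sets, so it has fewer than `𝔠` points; but by the Borel isomorphism theorem a measurable
subset of ℝ of positive measure, being uncountable, has `𝔠` points. So the `y` with non-null fibre
form a measurable set covered by the zero sets of the `cᵢ`, null by induction, and Fubini concludes.
-/

open Cardinal

theorem MeasurableSet.continuum_le_mk_of_not_countable {α : Type*} [MeasurableSpace α]
    [StandardBorelSpace α] {s : Set α} (hs : MeasurableSet s) (h : ¬s.Countable) : 𝔠 ≤ #s := by
  have := hs.standardBorel
  have e := PolishSpace.measurableEquivNatBoolOfNotCountable (α := s)
    (by rwa [Set.countable_coe_iff])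
  simpa using (Cardinal.lift_mk_eq'.mpr ⟨e.toEquiv⟩).ge

theorem MeasureTheory.measure_eq_zero_of_mk_lt_continuum {α : Type*} [MeasurableSpace α]
    [StandardBorelSpace α] {μ : Measure α} [NullSingletonClass μ] {s : Set α} (hs : MeasurableSet s)
    (h : #s < 𝔠) : μ s = 0 := by
  by_contra hμ
  exact h.not_ge (hs.continuum_le_mk_of_not_countable fun hc => hμ (hc.measure_zero μ))

universe u in
theorem Cardinal.mk_iUnion_lt_continuum {α ι : Type u} {s : ι → Set α} (hι : #ι < 𝔠)
    (hs : ∀ i, (s i).Countable) : #(⋃ i, s i) < 𝔠 := by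
  calc #(⋃ i, s i) ≤ #ι * ⨆ i, #(s i) := mk_iUnion_le s
    _ ≤ #ι * ℵ₀ := by gcongr; exact ciSup_le' fun i => (hs i).le_aleph0
    _ < 𝔠 := mul_lt_of_lt aleph0_le_continuum hι aleph0_lt_continuum

theorem MvPolynomial.exists_ne_zero_finite_setOf_eval_cons_eq_zero {R : Type*} [CommRing R]
    [IsDomain R] {n : ℕ} {p : MvPolynomial (Fin (n + 1)) R} (hp : p ≠ 0) :
    ∃ c : MvPolynomial (Fin n) R, c ≠ 0 ∧
      ∀ y, eval y c ≠ 0 → {t | eval (Fin.cons t y) p = 0}.Finite := by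
  refine ⟨(finSuccEquiv R n p).leadingCoeff, by simpa using hp, fun y hy => ?_⟩
  have hmap : (finSuccEquiv R n p).map (eval y) ≠ 0 := fun h =>
    hy (by simpa using congrArg (Polynomial.coeff · (finSuccEquiv R n p).natDegree) h)
  simpa [eval_eq_eval_mv_eval'] using Polynomial.finite_setOfPred_isRoot hmap

section Fiber

variable {α : Type*} [MeasureSpace α] [SigmaFinite (volume : Measure α)] {n : ℕ}

theorem measurePreserving_cons_swap :
    MeasurePreserving (fun p : (Fin n → α) × α => (Fin.cons p.2 p.1 : Fin (n + 1) → α)) := by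
  have := (volume_preserving_piFinSuccAbove (fun _ : Fin (n + 1) => α) 0).symm.comp
    Measure.measurePreserving_swap
  convert this using 1
  · ext p : 1
    simp [MeasurableEquiv.piFinSuccAbove_symm_apply, Fin.consEquiv]
  · exact Measure.volume_eq_prod _ _

theorem measurable_volume_cons_mem {B : Set (Fin (n + 1) → α)} (hB : MeasurableSet B) :
    Measurable fun y : Fin n → α => volume {t : α | (Fin.cons t y : Fin (n + 1) → α) ∈ B} :=
  measurable_measure_prodMk_left (measurePreserving_cons_swap.measurable hB)

theorem volume_eq_zero_iff_ae_volume_cons_mem {B : Set (Fin (n + 1) → α)} (hB : MeasurableSet B) :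
    volume B = 0 ↔ ∀ᵐ y : Fin n → α, volume {t : α | (Fin.cons t y : Fin (n + 1) → α) ∈ B} = 0 := by
  rw [← measurePreserving_cons_swap.measure_preimage hB.nullMeasurableSet, Measure.volume_eq_prod,
    Measure.measure_prod_null (measurePreserving_cons_swap.measurable hB)]
  rfl

end Fiber

theorem volume_eq_zero_of_forall_mem_exists_eval_eq_zero {ι : Type} (hι : #ι < 𝔠) {n : ℕ}
    {p : ι → MvPolynomial (Fin n) ℝ} (hp : ∀ i, p i ≠ 0) {B : Set (Fin n → ℝ)}
    (hB : MeasurableSet B) (hBp : ∀ x ∈ B, ∃ i, MvPolynomial.eval x (p i) = 0) :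
    volume B = 0 := by
  induction n with
  | zero =>
    suffices B = ∅ by simp [this]
    refine Set.eq_empty_of_forall_notMem fun x hx => ?_
    obtain ⟨i, hi⟩ := hBp x hx
    rw [MvPolynomial.eq_C_of_isEmpty (p i), MvPolynomial.eval_C] at hi
    exact hp i (by rw [MvPolynomial.eq_C_of_isEmpty (p i), hi, map_zero])
  | succ n ih =>
    choose c hc hfin using fun i =>
      MvPolynomial.exists_ne_zero_finite_setOf_eval_cons_eq_zero (hp i)
    rw [volume_eq_zero_iff_ae_volume_cons_mem hB, ae_iff]
    refine ih hc (measurable_volume_cons_mem hB (measurableSet_singleton 0).compl) fun y hy => ?_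
    by_contra! hyc
    refine hy (measure_eq_zero_of_mk_lt_continuum
      (measurable_prodMk_left (measurePreserving_cons_swap.measurable hB)) ?_)
    have hfiber : {t | (Fin.cons t y : Fin (n + 1) → ℝ) ∈ B} ⊆
        ⋃ i, {t | MvPolynomial.eval (Fin.cons t y) (p i) = 0} := fun t ht =>
      Set.mem_iUnion.mpr (hBp _ ht)
    exact (mk_le_mk_of_subset hfiber).trans_lt
      (mk_iUnion_lt_continuum hι fun i => (hfin i y (hyc i)).countable)

theorem stmt4 (n : ℕ) (ι : Type) (hcard : Cardinal.mk ι < Cardinal.continuum)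
    (A : ι → Set (Fin n → ℝ)) (hA : ∀ i, IsProperAlgebraic (A i))
    (B : Set (Fin n → ℝ)) (hB : B ⊆ ⋃ i, A i) (hmeas : MeasurableSet B) :
    volume B = 0 := by
  choose p hp hAp using hA
  refine volume_eq_zero_of_forall_mem_exists_eval_eq_zero hcard hp hmeas fun x hx => ?_
  obtain ⟨i, hi⟩ := Set.mem_iUnion.mp (hB hx)
  exact ⟨i, by rwa [hAp i] at hi⟩
end

section
/- Let A ⊂ ℝⁿ be a compact set with ℋˢ(A) > 0 for some s > 0. Then there exists a closed ball B such that the s-dimensional Hausdorff content of A ∩ B satisfies ℋˢ_∞(A ∩ B) ≥ c · diam(B)ˢ, where c = 2^{−2−s}. -/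
/-!
If every closed ball `B` centred in `A` carries content `ℋˢ_∞(A ∩ B) < c · diam(B)ˢ`, then every
set `U` meeting `A` lies in a ball of diameter `≤ 2 diam U` centred in `A`, so
`ℋˢ_∞(A ∩ U) ≤ c 2ˢ diam(U)ˢ`. Feeding this into the covers defining `ℋˢ_∞(A)` gives
`ℋˢ_∞(A) ≤ c 2ˢ ℋˢ_∞(A)`, impossible when `c 2ˢ < 1` and `0 < ℋˢ_∞(A) < ∞`. For compact `A`
the content is finite, and it is positive as soon as `ℋˢ(A) > 0`.
-/

open MeasureTheory ENNReal

/-- The `s`-dimensional Hausdorff content. -/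
noncomputable def hContent {X : Type*} [EMetricSpace X] (s : ℝ) (A : Set X) : ℝ≥0∞ :=
  ⨅ (U : ℕ → Set X) (_ : A ⊆ ⋃ i, U i), ∑' i, EMetric.diam (U i) ^ s

open Metric Filter Topology

section HausdorffContent

variable {X : Type*} [EMetricSpace X] {s : ℝ}

noncomputable def hContentOuterMeasure (hs : 0 < s) : OuterMeasure X :=
  OuterMeasure.ofFunction (fun U => ediam U ^ s) (by simp [zero_rpow_of_pos hs])

theorem hContentOuterMeasure_apply (hs : 0 < s) (A : Set X) :
    hContentOuterMeasure hs A = hContent s A :=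
  rfl

theorem hContent_mono (hs : 0 < s) {A B : Set X} (h : A ⊆ B) : hContent s A ≤ hContent s B := by
  simpa only [← hContentOuterMeasure_apply hs] using measure_mono h

theorem hContent_empty (hs : 0 < s) : hContent s (∅ : Set X) = 0 := by
  simp only [← hContentOuterMeasure_apply hs, measure_empty]

theorem hContent_le_ediam_rpow (hs : 0 < s) (A : Set X) : hContent s A ≤ ediam A ^ s :=
  (hContentOuterMeasure_apply hs A).symm.trans_le (OuterMeasure.ofFunction_le A)

theorem hContent_le_mul_self_of_forall_inter_le (hs : 0 < s) {K : ℝ≥0∞} (hK : K ≠ ⊤)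
    {A : Set X} (h : ∀ U, hContent s (A ∩ U) ≤ K * ediam U ^ s) :
    hContent s A ≤ K * hContent s A := by
  have hle : OuterMeasure.restrict A (hContentOuterMeasure hs) ≤ K • hContentOuterMeasure hs := by
    rw [hContentOuterMeasure, OuterMeasure.smul_ofFunction hK]
    refine OuterMeasure.le_ofFunction.2 fun U => ?_
    rw [OuterMeasure.restrict_apply, Set.inter_comm]
    exact h U
  simpa [hContentOuterMeasure_apply] using hle A

theorem hausdorffMeasure_eq_zero_of_hContent_eq_zero [MeasurableSpace X] [BorelSpace X]
    (hs : 0 < s) {A : Set X} (h : hContent s A = 0) : μH[s] A = 0 := by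
  have hcover (n : ℕ) : ∃ t : ℕ → Set X, A ⊆ ⋃ i, t i ∧ ∑' i, ediam (t i) ^ s < (n : ℝ≥0∞)⁻¹ := by
    have : hContent s A < (n : ℝ≥0∞)⁻¹ := h ▸ ENNReal.inv_pos.2 (natCast_ne_top n)
    simp only [hContent, iInf_lt_iff, exists_prop] at this
    exact this
  choose t hcov hsum using hcover
  have hdiam (n i) : ediam (t n i) ≤ ((n : ℝ≥0∞)⁻¹) ^ s⁻¹ :=
    (le_rpow_inv_iff hs).2 ((ENNReal.le_tsum i).trans (hsum n).le)
  have hr : Tendsto (fun n : ℕ => ((n : ℝ≥0∞)⁻¹) ^ s⁻¹) atTop (𝓝 0) := by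
    have := ((continuous_rpow_const (y := s⁻¹)).tendsto 0).comp ENNReal.tendsto_inv_nat_nhds_zero
    rwa [zero_rpow_of_pos (inv_pos.2 hs)] at this
  refine le_antisymm ?_ zero_le
  calc μH[s] A ≤ liminf (fun n => ∑' i, ediam (t n i) ^ s) atTop :=
        Measure.hausdorffMeasure_le_liminf_tsum s A _ hr t (.of_forall hdiam) (.of_forall hcov)
    _ ≤ liminf (fun n : ℕ => (n : ℝ≥0∞)⁻¹) atTop :=
        liminf_le_liminf (.of_forall fun n => (hsum n).le)
    _ = 0 := ENNReal.tendsto_inv_nat_nhds_zero.liminf_eq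

end HausdorffContent

section MetricSpace

variable {X : Type*} [MetricSpace X] {s : ℝ}

theorem ediam_closedBall_le (x : X) (r : ℝ) : ediam (closedBall x r) ≤ ENNReal.ofReal (2 * r) :=
  ediam_le_of_forall_dist_le fun _ hy _ hz =>
    (dist_triangle_right _ _ x).trans (by linarith [mem_closedBall.1 hy, mem_closedBall.1 hz])

theorem hContent_inter_le_of_forall_closedBall (hs : 0 < s) {c : ℝ≥0∞} (hc : c ≠ 0) {A : Set X}
    (hball : ∀ x ∈ A, ∀ r : ℝ, 0 < r →
      hContent s (A ∩ closedBall x r) ≤ c * ediam (closedBall x r) ^ s)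
    (U : Set X) : hContent s (A ∩ U) ≤ c * 2 ^ s * ediam U ^ s := by
  obtain hempty | ⟨x, hxA, hxU⟩ := (A ∩ U).eq_empty_or_nonempty
  · simp [hempty, hContent_empty hs]
  obtain htop | hU := eq_or_ne (ediam U) ⊤
  · simp [htop, hc, top_rpow_of_pos hs]
  obtain hzero | hU0 := eq_or_ne (ediam U) 0
  · calc hContent s (A ∩ U) ≤ ediam (A ∩ U) ^ s := hContent_le_ediam_rpow hs _
      _ ≤ ediam U ^ s := by gcongr; exact Set.inter_subset_right
      _ = 0 := by rw [hzero, zero_rpow_of_pos hs]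
      _ ≤ _ := zero_le
  have hdiam : 0 < diam U := toReal_pos hU0 hU
  have hsub : A ∩ U ⊆ A ∩ closedBall x (diam U) :=
    Set.inter_subset_inter_right A fun y hy => dist_le_diam_of_mem' hU hy hxU
  calc hContent s (A ∩ U) ≤ hContent s (A ∩ closedBall x (diam U)) := hContent_mono hs hsub
    _ ≤ c * ediam (closedBall x (diam U)) ^ s := hball x hxA _ hdiam
    _ ≤ c * (2 * ediam U) ^ s := by
        gcongr
        rw [← ofReal_toReal hU, ← ofReal_ofNat 2, ← ofReal_mul zero_le_two]
        exact ediam_closedBall_le x _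
    _ = c * 2 ^ s * ediam U ^ s := by rw [mul_rpow_of_nonneg _ _ hs.le, mul_assoc]

theorem exists_mem_closedBall_mul_ediam_rpow_le_hContent (hs : 0 < s) {c : ℝ≥0∞} (hc0 : c ≠ 0)
    (hc : c * 2 ^ s < 1) {A : Set X} (hA0 : hContent s A ≠ 0) (hA : hContent s A ≠ ⊤) :
    ∃ x ∈ A, ∃ r : ℝ, 0 < r ∧ c * ediam (closedBall x r) ^ s ≤ hContent s (A ∩ closedBall x r) := by
  by_contra! hsmall
  have hself := hContent_le_mul_self_of_forall_inter_le hs hc.ne_top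
    (hContent_inter_le_of_forall_closedBall hs hc0 fun x hx r hr => (hsmall x hx r hr).le)
  have hshrink : c * 2 ^ s * hContent s A < hContent s A := by
    simpa [mul_comm] using ENNReal.mul_lt_mul_right hA0 hA hc
  exact (hself.trans_lt hshrink).false

end MetricSpace

theorem stmt7 (n : ℕ) (s : ℝ) (hs : 0 < s) (A : Set (EuclideanSpace ℝ (Fin n)))
    (hA : IsCompact A) (hpos : 0 < μH[s] A) :
    ∃ (x : EuclideanSpace ℝ (Fin n)) (r : ℝ), 0 < r ∧
      ENNReal.ofReal (2 ^ (-2 - s)) * EMetric.diam (Metric.closedBall x r) ^ s ≤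
        hContent s (A ∩ Metric.closedBall x r) := by
  have hc : ENNReal.ofReal (2 ^ (-2 - s)) * 2 ^ s < 1 := by
    rw [← ofReal_ofNat 2, ofReal_rpow_of_pos two_pos, ← ofReal_mul (by positivity),
      ← Real.rpow_add two_pos, sub_add_cancel]
    exact ofReal_lt_one.2 (by norm_num)
  have hfinite : hContent s A ≠ ⊤ := ((hContent_le_ediam_rpow hs A).trans_lt
    (rpow_lt_top_of_nonneg hs.le hA.isBounded.ediam_ne_top)).ne
  obtain ⟨x, -, r, hr, hball⟩ := exists_mem_closedBall_mul_ediam_rpow_le_hContent hs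
    (ofReal_pos.2 (by positivity)).ne' hc
    (fun h => hpos.ne' (hausdorffMeasure_eq_zero_of_hContent_eq_zero hs h)) hfinite
  exact ⟨x, r, hr, hball⟩
end

section
/- Suppose compact sets A_i ⊂ ℝⁿ converge in the Hausdorff metric to a compact set A, and for each i the set A_i does not contain any angle from the closed interval [α − δ + 1/i, α + δ − 1/i]. Then A does not contain any angle from the open interval (α − δ, α + δ). -/
open InnerProductGeometry Filter

/-- The set `A` contains the angle `α`. -/
def ContainsAngle {n : ℕ} (A : Set (EuclideanSpace ℝ (Fin n))) (α : ℝ) : Prop :=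
  ∃ x y z, x ∈ A ∧ y ∈ A ∧ z ∈ A ∧ x ≠ y ∧ x ≠ z ∧ y ≠ z ∧
    angle (y - x) (z - x) = α

/-! The angle at `x` of a triangle `x y z` depends continuously on the vertices, and
non-degeneracy of a triangle is an open condition. A set Hausdorff-close to `B` contains a
triangle close to any given non-degenerate triangle of `B`, so an angle `θ ∈ (α - δ, α + δ)`
contained in `B` would reappear, perturbed by less than `1 / (i + 1)`, in the forbidden closed
interval of some `A i`. -/

theorem exists_pos_forall_dist_lt_ne_angle_near {V : Type*} [NormedAddCommGroup V]
    [InnerProductSpace ℝ V] {x y z : V} (hxy : x ≠ y) (hxz : x ≠ z) (hyz : y ≠ z)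
    {ε : ℝ} (hε : 0 < ε) :
    ∃ s > 0, ∀ x' y' z' : V, dist x' x < s → dist y' y < s → dist z' z < s →
      x' ≠ y' ∧ x' ≠ z' ∧ y' ≠ z' ∧
        dist (angle (y' - x') (z' - x')) (angle (y - x) (z - x)) < ε := by
  have hangle : ContinuousAt (fun p : V × V × V => angle (p.2.1 - p.1) (p.2.2 - p.1))
      (x, y, z) :=
    ContinuousAt.comp (x := (x, y, z)) (f := fun p : V × V × V => (p.2.1 - p.1, p.2.2 - p.1))
      (g := fun q : V × V => angle q.1 q.2)
      (continuousAt_angle (sub_ne_zero.2 hxy.symm) (sub_ne_zero.2 hxz.symm)) (by fun_prop)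
  have hnear : ∀ᶠ p : V × V × V in nhds (x, y, z), p.1 ≠ p.2.1 ∧ p.1 ≠ p.2.2 ∧
      p.2.1 ≠ p.2.2 ∧ dist (angle (p.2.1 - p.1) (p.2.2 - p.1)) (angle (y - x) (z - x)) < ε := by
    filter_upwards [(isOpen_ne_fun continuous_fst continuous_snd.fst).mem_nhds hxy,
      (isOpen_ne_fun continuous_fst continuous_snd.snd).mem_nhds hxz,
      (isOpen_ne_fun continuous_snd.fst continuous_snd.snd).mem_nhds hyz,
      Metric.tendsto_nhds.1 hangle ε hε] with p h₁ h₂ h₃ h₄ using ⟨h₁, h₂, h₃, h₄⟩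
  obtain ⟨s, hs, hball⟩ := Metric.eventually_nhds_iff.1 hnear
  refine ⟨s, hs, fun x' y' z' hx hy hz => hball (y := (x', y', z')) ?_⟩
  simpa only [Prod.dist_eq, max_lt_iff] using ⟨hx, hy, hz⟩

theorem ContainsAngle.eventually_exists_near {n : ℕ} {ι : Type*} {l : Filter ι}
    {A : ι → Set (EuclideanSpace ℝ (Fin n))} {B : Set (EuclideanSpace ℝ (Fin n))}
    (hconv : Tendsto (fun i => Metric.hausdorffEDist (A i) B) l (nhds 0))
    {θ : ℝ} (hB : ContainsAngle B θ) {ε : ℝ} (hε : 0 < ε) :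
    ∀ᶠ i in l, ∃ θ', dist θ' θ < ε ∧ ContainsAngle (A i) θ' := by
  obtain ⟨x, y, z, hx, hy, hz, hxy, hxz, hyz, rfl⟩ := hB
  obtain ⟨s, hs, hnear⟩ := exists_pos_forall_dist_lt_ne_angle_near hxy hxz hyz hε
  filter_upwards [hconv (Iio_mem_nhds (ENNReal.ofReal_pos.2 hs))] with i hi
  rw [Set.mem_preimage, Set.mem_Iio, Metric.hausdorffEDist_comm] at hi
  obtain ⟨x', hx', hxx'⟩ := Metric.exists_edist_lt_of_hausdorffEDist_lt hx hi
  obtain ⟨y', hy', hyy'⟩ := Metric.exists_edist_lt_of_hausdorffEDist_lt hy hi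
  obtain ⟨z', hz', hzz'⟩ := Metric.exists_edist_lt_of_hausdorffEDist_lt hz hi
  rw [edist_lt_ofReal, dist_comm] at hxx' hyy' hzz'
  obtain ⟨hxy', hxz', hyz', hangle⟩ := hnear x' y' z' hxx' hyy' hzz'
  exact ⟨_, hangle, x', y', z', hx', hy', hz', hxy', hxz', hyz', rfl⟩

theorem stmt9_general (n : ℕ) (α δ : ℝ)
    (A : ℕ → Set (EuclideanSpace ℝ (Fin n)))
    (B : Set (EuclideanSpace ℝ (Fin n)))
    (hconv : Tendsto (fun i => EMetric.hausdorffEdist (A i) B) atTop (nhds 0))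
    (havoid : ∀ i : ℕ, ∀ θ ∈ Set.Icc (α - δ + 1 / (i + 1 : ℝ)) (α + δ - 1 / (i + 1 : ℝ)),
      ¬ ContainsAngle (A i) θ) :
    ∀ θ ∈ Set.Ioo (α - δ) (α + δ), ¬ ContainsAngle B θ := by
  rintro θ ⟨hθα, hθδ⟩ hB
  obtain ⟨ε, hε, hεl, hεr⟩ : ∃ ε > 0, 2 * ε ≤ θ - (α - δ) ∧ 2 * ε ≤ α + δ - θ :=
    ⟨min (θ - (α - δ)) (α + δ - θ) / 2, half_pos (lt_min (by linarith) (by linarith)),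
      by linarith [min_le_left (θ - (α - δ)) (α + δ - θ)],
      by linarith [min_le_right (θ - (α - δ)) (α + δ - θ)]⟩
  obtain ⟨i, ⟨θ', hθ', hA⟩, hi⟩ := ((hB.eventually_exists_near hconv hε).and
    ((tendsto_one_div_add_atTop_nhds_zero_nat (𝕜 := ℝ)).eventually (Iic_mem_nhds hε))).exists
  replace hi : 1 / ((i : ℝ) + 1) ≤ ε := hi
  rw [Real.dist_eq, abs_lt] at hθ'
  exact havoid i θ' ⟨by linarith [hθ'.1], by linarith [hθ'.2]⟩ hA

theorem stmt9 (n : ℕ) (α δ : ℝ) (hδ : 0 < δ)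
    (A : ℕ → Set (EuclideanSpace ℝ (Fin n))) (hAi : ∀ i, IsCompact (A i))
    (B : Set (EuclideanSpace ℝ (Fin n))) (hB : IsCompact B)
    (hconv : Tendsto (fun i => EMetric.hausdorffEdist (A i) B) atTop (nhds 0))
    (havoid : ∀ i : ℕ, ∀ θ ∈ Set.Icc (α - δ + 1 / (i + 1 : ℝ)) (α + δ - 1 / (i + 1 : ℝ)),
      ¬ ContainsAngle (A i) θ) :
    ∀ θ ∈ Set.Ioo (α - δ) (α + δ), ¬ ContainsAngle B θ :=
  stmt9_general n α δ A B hconv havoid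
end

section
/- Let A ⊂ ℝⁿ be a bounded set whose upper Minkowski dimension exceeds t > 0. Then there exist infinitely many positive integers k such that for every integer 0 < l < k there are more than 2^{(k−l)t} points in A with the property that the distance between any two of them lies in the interval [2^{−k+1}, 2^{−l+2}]. -/
open Filter Set

/-- The maximal number of points of `A` that are centers of disjoint closed balls of
radius `ε` (equivalently, with pairwise distances greater than `2ε`), as `ℝ≥0∞`. -/
noncomputable def packNum {X : Type*} [MetricSpace X] (A : Set X) (ε : ℝ) : ENNReal :=
  ⨆ (S : Finset X) (_ : ↑S ⊆ A ∧ (S : Set X).Pairwise fun x y => 2 * ε < dist x y),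
    (S.card : ENNReal)

/-- The upper Minkowski dimension, defined via packing numbers. -/
noncomputable def upperMinkDim {X : Type*} [MetricSpace X] (A : Set X) : ℝ :=
  sSup {s : ℝ |
    limsup (fun ε : ℝ => packNum A ε * ENNReal.ofReal (ε ^ s)) (nhdsWithin 0 (Ioi 0)) = ⊤}

/-!
A bounded set in `ℝⁿ` is totally bounded, so each dyadic packing number `N k = P(A, 2^{-k})` is
finite and realised by a packing `S k`. Dimension `> t` makes `N k · 2^{-kt}` unbounded, hence
infinitely many `k` are records: `N l · 2^{-lt} < N k · 2^{-kt}` for all `l < k`. For such `k`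
and `l < k`, a maximal `2 · 2^{-l}`-separated subset of `S k` has at most `N l` points and every
point of `S k` lies within `2 · 2^{-l}` of it, so by pigeonhole more than `N k / N l > 2^{(k-l)t}`
points of `S k` lie within `2 · 2^{-l}` of a single one. Their mutual distances are at most
`2^{-l+2}`, and more than `2^{-k+1}` because they belong to the packing `S k`.
-/

open Metric
open scoped NNReal ENNReal Topology

section

variable {X : Type*} [MetricSpace X]

lemma isSeparated_coe_iff_pairwise_lt_dist {r : ℝ≥0} {s : Set X} :
    IsSeparated r s ↔ s.Pairwise fun x y => (r : ℝ) < dist x y := by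
  simp only [IsSeparated, edist_nndist, ENNReal.coe_lt_coe, ← NNReal.coe_lt_coe, coe_nndist]

lemma packNum_anti (A : Set X) : Antitone (packNum A) := fun _ _ h =>
  iSup₂_mono' fun S hS => ⟨S, ⟨hS.1, hS.2.mono' fun _ _ hxy => by linarith⟩, le_rfl⟩

lemma TotallyBounded.exists_card_le_of_pairwise {A : Set X} (hA : TotallyBounded A) {ε : ℝ}
    (hε : 0 < ε) : ∃ N : ℕ, ∀ S : Finset X, ↑S ⊆ A →
      (S : Set X).Pairwise (fun x y => 2 * ε < dist x y) → S.card ≤ N := by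
  lift ε to ℝ≥0 using hε.le
  obtain ⟨C, -, hCfin, hC⟩ := exists_finite_isCover_of_totallyBounded (by exact_mod_cast hε.ne') hA
  refine ⟨hCfin.toFinset.card, fun S hSA hS => ?_⟩
  have hsep : IsSeparated ((2 * ε : ℝ≥0) : ℝ≥0∞) (S : Set X) :=
    isSeparated_coe_iff_pairwise_lt_dist.2 (by simpa using hS)
  have := ((hsep.encard_le_packingNumber hSA).trans
    (packingNumber_two_mul_le_externalCoveringNumber ε A)).trans hC.externalCoveringNumber_le_encard
  rw [Set.encard_coe_eq_coe_finsetCard, hCfin.encard_eq_coe_toFinset_card] at this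
  exact_mod_cast this

lemma Finset.exists_subset_pairwise_forall_exists_dist_le (S : Finset X) (r : ℝ≥0) :
    ∃ Y ⊆ S, (Y : Set X).Pairwise (fun x y => (r : ℝ) < dist x y) ∧
      ∀ x ∈ S, ∃ y ∈ Y, dist x y ≤ r := by
  have hfin : packingNumber r (S : Set X) ≠ ⊤ :=
    ne_top_of_le_ne_top (by simp) (packingNumber_le_encard_self _)
  have hYfin := S.finite_toSet.subset (maximalSeparatedSet_subset (ε := r))
  refine ⟨hYfin.toFinset, hYfin.toFinset_subset.2 maximalSeparatedSet_subset, ?_, fun x hx => ?_⟩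
  · simpa [isSeparated_coe_iff_pairwise_lt_dist] using
      isSeparated_maximalSeparatedSet (ε := r) (A := (S : Set X))
  · obtain ⟨y, hy, hxy⟩ := isCover_maximalSeparatedSet hfin hx
    have hxy : edist x y ≤ r := hxy
    rw [edist_nndist, ENNReal.coe_le_coe, ← NNReal.coe_le_coe, coe_nndist] at hxy
    exact ⟨y, hYfin.mem_toFinset.2 hy, hxy⟩

lemma TotallyBounded.exists_packNum_eq {A : Set X} (hA : TotallyBounded A) {ε : ℝ} (hε : 0 < ε) :
    ∃ S : Finset X, ↑S ⊆ A ∧ (S : Set X).Pairwise (fun x y => 2 * ε < dist x y) ∧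
      packNum A ε = S.card := by
  obtain ⟨N, hN⟩ := hA.exists_card_le_of_pairwise hε
  have hbdd : BddAbove {c | ∃ S : Finset X,
      (↑S ⊆ A ∧ (S : Set X).Pairwise fun x y => 2 * ε < dist x y) ∧ S.card = c} :=
    ⟨N, by rintro _ ⟨S, hS, rfl⟩; exact hN S hS.1 hS.2⟩
  obtain ⟨S, hS, hcard⟩ := Nat.sSup_mem (by exact ⟨0, ∅, by simp⟩) hbdd
  refine ⟨S, hS.1, hS.2, le_antisymm (iSup₂_le fun S' hS' => ?_) (le_iSup₂_of_le S hS le_rfl)⟩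
  rw [hcard]
  exact_mod_cast le_csSup hbdd ⟨S', hS', rfl⟩

lemma exists_subset_card_gt_dist_le_of_packNum_le {A : Set X} {S : Finset X} (hSA : ↑S ⊆ A)
    {ε m : ℝ} (hε : 0 ≤ ε) (hm : 0 ≤ m) {N : ℕ} (hN : packNum A ε ≤ N) (hNS : N * m < S.card) :
    ∃ T ⊆ S, m < T.card ∧ ∀ x ∈ T, ∀ y ∈ T, dist x y ≤ 4 * ε := by
  classical
  obtain ⟨Y, hYS, hYsep, hcov⟩ :=
    S.exists_subset_pairwise_forall_exists_dist_le ⟨2 * ε, by positivity⟩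
  have hY : Y.card ≤ N := by
    have : (Y.card : ℝ≥0∞) ≤ packNum A ε :=
      le_iSup₂_of_le Y ⟨(Finset.coe_subset.2 hYS).trans hSA, hYsep⟩ le_rfl
    exact_mod_cast this.trans hN
  choose! f hfY hf using hcov
  obtain ⟨y, -, hy⟩ := Finset.exists_lt_card_fiber_of_nsmul_lt_card_of_maps_to hfY (b := m) <| by
    rw [nsmul_eq_mul]
    exact lt_of_le_of_lt (by gcongr) hNS
  refine ⟨S.filter (f · = y), Finset.filter_subset _ _, hy, fun x hx x' hx' => ?_⟩
  rw [Finset.mem_filter] at hx hx'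
  obtain ⟨hxS, rfl⟩ := hx
  calc dist x x' ≤ dist x (f x) + dist x' (f x') := by
        rw [hx'.2]
        exact dist_triangle_right _ _ _
    _ ≤ 2 * ε + 2 * ε := add_le_add (hf x hxS) (hf x' hx'.1)
    _ = 4 * ε := by ring

lemma exists_gt_forall_lt_of_not_bddAbove {α : Type*} [LinearOrder α] {a : ℕ → α}
    (ha : ¬BddAbove (range a)) (N : ℕ) : ∃ k, N < k ∧ ∀ l < k, a l < a k := by
  have : Nonempty α := ⟨a 0⟩
  obtain ⟨M, hM⟩ := ((Set.finite_Iic N).image a).bddAbove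
  have hex : ∃ k, M < a k := by
    simp only [not_bddAbove_iff, Set.exists_range_iff] at ha
    exact ha M
  refine ⟨Nat.find hex, ?_, fun l hl =>
    (not_lt.1 (Nat.find_min hex hl)).trans_lt (Nat.find_spec hex)⟩
  by_contra! h
  exact (Nat.find_spec hex).not_ge (hM ⟨_, h, rfl⟩)

lemma limsup_packNum_mul_rpow_le {A : Set X} {s : ℝ} (hs : 0 ≤ s) {C : ℝ≥0∞}
    (hC : ∀ k : ℕ, packNum A (2 ^ (-(k : ℝ))) * ENNReal.ofReal ((2 ^ (-(k : ℝ))) ^ s) ≤ C) :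
    limsup (fun ε : ℝ => packNum A ε * ENNReal.ofReal (ε ^ s)) (𝓝[>] 0) ≤
      ENNReal.ofReal (2 ^ s) * C := by
  refine limsup_le_of_le (by isBoundedDefault) ?_
  filter_upwards [Ioc_mem_nhdsGT one_pos] with ε ⟨hε0, hε1⟩
  obtain ⟨n, hlt, hle⟩ :=
    exists_nat_pow_near_of_lt_one hε0 hε1 (by norm_num : (0 : ℝ) < 1 / 2) (by norm_num)
  have hδ : (2 : ℝ) ^ (-((n + 1 : ℕ) : ℝ)) = (1 / 2) ^ (n + 1) := by
    rw [Real.rpow_neg zero_le_two, Real.rpow_natCast, one_div_pow, one_div]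
  set δ : ℝ := 2 ^ (-((n + 1 : ℕ) : ℝ))
  have hεδ : ε ≤ 2 * δ := by rw [hδ, pow_succ]; linarith
  calc packNum A ε * ENNReal.ofReal (ε ^ s)
      ≤ packNum A δ * ENNReal.ofReal ((2 * δ) ^ s) := by
        gcongr
        exact packNum_anti A (hδ ▸ hlt.le)
    _ = ENNReal.ofReal (2 ^ s) * (packNum A δ * ENNReal.ofReal (δ ^ s)) := by
        rw [Real.mul_rpow zero_le_two (by positivity), ENNReal.ofReal_mul (by positivity)]
        ring
    _ ≤ ENNReal.ofReal (2 ^ s) * C := by gcongr; exact hC _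

lemma not_bddAbove_card_mul_rpow {A : Set X} {N : ℕ → ℕ}
    (hN : ∀ k : ℕ, packNum A (2 ^ (-(k : ℝ))) = N k) {t : ℝ} (ht : 0 ≤ t)
    (hdim : t < upperMinkDim A) :
    ¬BddAbove (range fun k : ℕ => (N k : ℝ) * (2 ^ (-(k : ℝ))) ^ t) := by
  obtain ⟨s, hs, hts⟩ : ∃ s, limsup (fun ε : ℝ => packNum A ε * ENNReal.ofReal (ε ^ s))
      (𝓝[>] 0) = ⊤ ∧ t < s := by
    by_contra! h
    exact hdim.not_ge (Real.sSup_le h ht)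
  rintro ⟨C, hC⟩
  have hlim := limsup_packNum_mul_rpow_le (A := A) (ht.trans hts.le) (C := ENNReal.ofReal C)
    fun k => by
      rw [hN k, ← ENNReal.ofReal_natCast, ← ENNReal.ofReal_mul (by positivity)]
      refine ENNReal.ofReal_le_ofReal ((mul_le_mul_of_nonneg_left ?_ (by positivity)).trans
        (hC ⟨k, rfl⟩))
      exact Real.rpow_le_rpow_of_exponent_ge (by positivity)
        (Real.rpow_le_one_of_one_le_of_nonpos one_le_two (by simp)) hts.le
  rw [hs, top_le_iff] at hlim
  exact ENNReal.mul_ne_top ENNReal.ofReal_ne_top ENNReal.ofReal_ne_top hlim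

lemma mul_two_rpow_sub_lt_of_mul_rpow_lt {a b t : ℝ} {k l : ℕ}
    (h : a * (2 ^ (-(l : ℝ))) ^ t < b * (2 ^ (-(k : ℝ))) ^ t) :
    a * 2 ^ (((k : ℝ) - l) * t) < b := by
  have e : (2 : ℝ) ^ (((k : ℝ) - l) * t) = (2 ^ (-(l : ℝ))) ^ t / (2 ^ (-(k : ℝ))) ^ t := by
    rw [← Real.rpow_mul zero_le_two, ← Real.rpow_mul zero_le_two, ← Real.rpow_sub two_pos]
    ring_nf
  rwa [e, ← mul_div_assoc, div_lt_iff₀ (by positivity)]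

end

theorem stmt10 (n : ℕ) (A : Set (EuclideanSpace ℝ (Fin n))) (hbd : Bornology.IsBounded A)
    (t : ℝ) (ht : 0 < t) (hdim : t < upperMinkDim A) :
    {k : ℕ | 0 < k ∧ ∀ l : ℕ, 0 < l → l < k →
      ∃ S : Finset (EuclideanSpace ℝ (Fin n)), ↑S ⊆ A ∧
        (2 : ℝ) ^ (((k : ℝ) - l) * t) < S.card ∧
        ∀ x ∈ S, ∀ y ∈ S, x ≠ y →
          dist x y ∈ Icc ((2 : ℝ) ^ (-(k : ℝ) + 1)) ((2 : ℝ) ^ (-(l : ℝ) + 2))}.Infinite := by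
  have hA : TotallyBounded A := hbd.isCompact_closure.totallyBounded.subset subset_closure
  choose S hSA hSsep hScard using fun k : ℕ =>
    hA.exists_packNum_eq (ε := (2 : ℝ) ^ (-(k : ℝ))) (by positivity)
  have hrecords :=
    exists_gt_forall_lt_of_not_bddAbove (not_bddAbove_card_mul_rpow hScard ht.le hdim)
  refine infinite_of_forall_exists_gt fun N => ?_
  obtain ⟨k, hNk, hk⟩ := hrecords N
  refine ⟨k, ⟨by omega, fun l _ hlk => ?_⟩, hNk⟩
  obtain ⟨T, hTS, hTcard, hTdist⟩ := exists_subset_card_gt_dist_le_of_packNum_le (hSA k)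
    (by positivity) (by positivity) (hScard l).le (mul_two_rpow_sub_lt_of_mul_rpow_lt (hk l hlk))
  refine ⟨T, (Finset.coe_subset.2 hTS).trans (hSA k), hTcard, fun x hx y hy hxy => ⟨?_, ?_⟩⟩
  · rw [Real.rpow_add_one two_ne_zero, mul_comm]
    exact (hSsep k (hTS hx) (hTS hy) hxy).le
  · rw [show (2 : ℝ) ^ (-(l : ℝ) + 2) = 4 * 2 ^ (-(l : ℝ)) by
      rw [Real.rpow_add two_pos, Real.rpow_two]; ring]
    exact hTdist x hx y hy
end

section
/- Any bounded set A ⊂ ℝⁿ (n ≥ 2) with upper Minkowski dimension greater than 1 contains angles arbitrarily close to 90°: for every ε > 0 there exist distinct points x, y, z ∈ A such that the angle at x between y − x and z − x lies in (90° − ε, 90° + ε). -/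
open Filter Set InnerProductGeometry Real

/-!
If no angle of `A` lies within `δ` of a right angle, then every angle `θ` of `A` has
`|cos θ| ≥ c := sin δ`. Take an `ε`-packing of `A`, fix one of its points `o` and sort the
others into shells around `o` of width `c ε`. By the law of cosines, two points of the shell at
radius `w` are at least `2 c w` apart: an obtuse angle at the nearer one would push the farther
one out of the thin shell, while an acute angle forces the side between them to be long. A
volume argument then bounds each shell by `((2 + c) / c) ^ n` points, so the packing numbers are
`O(1 / ε)` and the upper Minkowski dimension of `A` is at most `1`.
-/

open MeasureTheory Metric Topology
open scoped ENNReal Finset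

theorem upperMinkDim_le_of_packNum_le {X : Type*} [MetricSpace X] {A : Set X} {d C : ℝ}
    (hd : 0 ≤ d) (h : ∀ᶠ ε in 𝓝[>] 0, packNum A ε ≤ ENNReal.ofReal (C * ε ^ (-d))) :
    upperMinkDim A ≤ d := by
  refine Real.sSup_le (fun s hs => ?_) hd
  by_contra! hds
  have hle : ∀ᶠ ε in 𝓝[>] 0,
      packNum A ε * ENNReal.ofReal (ε ^ s) ≤ ENNReal.ofReal (C * ε ^ (s - d)) := by
    filter_upwards [h, self_mem_nhdsWithin] with ε hε hε₀
    calc _ ≤ ENNReal.ofReal (C * ε ^ (-d)) * ENNReal.ofReal (ε ^ s) := by gcongr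
      _ = _ := by
        rw [← ENNReal.ofReal_mul' (rpow_nonneg hε₀.le s), mul_assoc, ← rpow_add hε₀,
          neg_add_eq_sub]
  have hlim : Tendsto (fun ε : ℝ => ENNReal.ofReal (C * ε ^ (s - d))) (𝓝[>] 0) (𝓝 0) := by
    have := ((continuousAt_rpow_const 0 (s - d) (Or.inr (by linarith))).tendsto.const_mul C)
    rw [zero_rpow (by linarith), mul_zero] at this
    simpa using ENNReal.tendsto_ofReal (this.mono_left nhdsWithin_le_nhds)
  have := (limsup_le_limsup hle).trans hlim.limsup_eq.le
  exact ENNReal.top_ne_zero (le_zero_iff.1 (hs ▸ this))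

section Packing

variable {E : Type*} [NormedAddCommGroup E] [NormedSpace ℝ E] [FiniteDimensional ℝ E]

theorem card_le_of_subset_closedBall_of_pairwise_le_dist {s : Finset E} {x : E} {r δ : ℝ}
    (hr : 0 ≤ r) (hδ : 0 < δ) (hs : ↑s ⊆ closedBall x r)
    (hsep : (s : Set E).Pairwise fun p q => 2 * δ ≤ dist p q) :
    (s.card : ℝ) ≤ ((r + δ) / δ) ^ Module.finrank ℝ E := by
  borelize E
  let μ : Measure E := Measure.addHaar
  have hdisj : (s : Set E).PairwiseDisjoint (ball · δ) := fun p hp q hq hpq =>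
    ball_disjoint_ball (by linarith [hsep hp hq hpq])
  have hsub : (⋃ p ∈ s, ball p δ) ⊆ ball x (r + δ) := iUnion₂_subset fun p hp =>
    ball_subset_ball' (by linarith [mem_closedBall.1 (hs hp)])
  have hvol : (s.card : ℝ≥0∞) * ENNReal.ofReal (δ ^ Module.finrank ℝ E) * μ (ball 0 1) ≤
      ENNReal.ofReal ((r + δ) ^ Module.finrank ℝ E) * μ (ball 0 1) := by
    calc _ = μ (⋃ p ∈ s, ball p δ) := by
          rw [measure_biUnion_finset hdisj fun p _ => measurableSet_ball]
          simp [Measure.addHaar_ball_of_pos μ _ hδ, mul_assoc]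
      _ ≤ μ (ball x (r + δ)) := measure_mono hsub
      _ = _ := Measure.addHaar_ball_of_pos μ _ (by positivity)
  rw [ENNReal.mul_le_mul_iff_left (measure_ball_pos μ 0 one_pos).ne' measure_ball_lt_top.ne,
    ← ENNReal.ofReal_natCast, ← ENNReal.ofReal_mul (by positivity),
    ENNReal.ofReal_le_ofReal_iff (by positivity)] at hvol
  rw [div_pow, le_div_iff₀ (by positivity)]
  exact hvol

end Packing

theorem sin_le_abs_cos_of_notMem_Ioo {θ δ : ℝ} (hθ₀ : 0 ≤ θ) (hθπ : θ ≤ π) (hδ : 0 ≤ δ)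
    (hθ : θ ∉ Ioo (π / 2 - δ) (π / 2 + δ)) : sin δ ≤ |cos θ| := by
  have hθ' : |π / 2 - θ| ≤ π / 2 := abs_le.2 ⟨by linarith, by linarith⟩
  rw [← sin_pi_div_two_sub, abs_sin_eq_sin_abs_of_abs_le_pi (by linarith [pi_pos])]
  rw [mem_Ioo, not_and_or, not_lt, not_lt] at hθ
  apply sin_le_sin_of_le_of_le_pi_div_two (by linarith [pi_pos]) hθ'
  rcases hθ with h | h
  · rw [abs_of_nonneg] <;> linarith
  · rw [abs_of_nonpos] <;> linarith

section Angles

open EuclideanGeometry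

variable {E : Type*} [NormedAddCommGroup E] [InnerProductSpace ℝ E]

def AvoidsNearRightAngles (c : ℝ) (s : Set E) : Prop :=
  ∀ x ∈ s, ∀ y ∈ s, ∀ z ∈ s, x ≠ y → x ≠ z → y ≠ z → c ≤ |cos (∠ y x z)|

theorem two_mul_mul_le_dist_of_le_abs_cos_angle {o p q : E} {c ε w : ℝ} (hc₀ : 0 ≤ c)
    (hc₁ : c ≤ 1) (hε : 0 ≤ ε) (hw : 0 ≤ w) (hangle : c ≤ |cos (∠ o p q)|)
    (hwp : w ≤ dist p o) (hpq : dist p o ≤ dist q o) (hq : dist q o < w + c * ε)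
    (hsep : 2 * ε < dist p q) :
    2 * c * w ≤ dist p q := by
  have hcos := dist_sq_eq_dist_sq_add_dist_sq_sub_two_mul_dist_mul_dist_mul_cos_angle o p q
  rw [dist_comm o q, dist_comm o p, dist_comm q p] at hcos
  set a := dist p o
  set b := dist q o
  set e := dist p q
  have hae : 0 ≤ a * e := by positivity
  -- obtuse: `b² ≥ a² + e² + 2 c a e > (w + c ε)²`; acute: `b ≥ a` forces `e ≥ 2 c a`
  rcases le_abs'.1 hangle with hobtuse | hacute
  · have hb : a * a + e * e + 2 * c * (a * e) ≤ b * b := by nlinarith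
    have hb' : b * b < (w + c * ε) * (w + c * ε) := by
      nlinarith [dist_nonneg (x := q) (y := o)]
    have ha : w * w ≤ a * a := mul_self_le_mul_self hw hwp
    have he : (2 * ε) * (2 * ε) ≤ e * e := mul_self_le_mul_self (by linarith) hsep.le
    have hcae : c * (w * (2 * ε)) ≤ c * (a * e) :=
      mul_le_mul_of_nonneg_left (mul_le_mul hwp hsep.le (by linarith) (by linarith)) hc₀
    nlinarith [mul_nonneg (mul_nonneg hc₀ hε) hw, mul_le_mul hc₁ hc₁ hc₀ zero_le_one,
      mul_self_nonneg ε]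
  · have he : 2 * c * a * e ≤ e * e := by nlinarith
    have : 2 * c * a ≤ e := le_of_mul_le_mul_right (by linarith) (show 0 < e by linarith)
    nlinarith

variable [FiniteDimensional ℝ E] {s : Finset E} {o : E} {c ε : ℝ}

theorem card_le_of_forall_mem_shell (hc₀ : 0 < c) (hc₁ : c ≤ 1) (hε : 0 < ε)
    (hs : AvoidsNearRightAngles c (s : Set E))
    (hsep : (s : Set E).Pairwise fun p q => 2 * ε < dist p q) (ho : o ∈ s) {t : Finset E}
    (hts : t ⊆ s) {w : ℝ} (hw : c * ε ≤ w)
    (ht : ∀ p ∈ t, w ≤ dist p o ∧ dist p o < w + c * ε) :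
    (#t : ℝ) ≤ ((2 + c) / c) ^ Module.finrank ℝ E := by
  have hw₀ : 0 < w := (mul_pos hc₀ hε).trans_le hw
  have hball : ↑t ⊆ closedBall o (2 * w) := fun p hp =>
    mem_closedBall.2 (by linarith [ht p hp])
  have hfar : ∀ p ∈ t, ∀ q ∈ t, p ≠ q → dist p o ≤ dist q o → 2 * (c * w) ≤ dist p q := by
    intro p hp q hq hpq hpqo
    have hpo : p ≠ o := dist_pos.1 (by linarith [ht p hp])
    have hqo : q ≠ o := dist_pos.1 (by linarith [ht q hq])
    rw [← mul_assoc]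
    exact two_mul_mul_le_dist_of_le_abs_cos_angle hc₀.le hc₁ hε.le hw₀.le
      (hs p (hts hp) o ho q (hts hq) hpo hpq hqo.symm) (ht p hp).1 hpqo (ht q hq).2
      (hsep (hts hp) (hts hq) hpq)
  have ht_sep : (t : Set E).Pairwise fun p q => 2 * (c * w) ≤ dist p q := by
    intro p hp q hq hpq
    rcases le_total (dist p o) (dist q o) with h | h
    · exact hfar p hp q hq hpq h
    · exact dist_comm q p ▸ hfar q hq p hp hpq.symm h
  calc _ ≤ ((2 * w + c * w) / (c * w)) ^ Module.finrank ℝ E :=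
        card_le_of_subset_closedBall_of_pairwise_le_dist (by linarith) (by positivity) hball
          ht_sep
    _ = _ := by rw [← add_mul, mul_div_mul_right _ _ hw₀.ne']

theorem card_filter_floor_dist_div_eq_le (hc₀ : 0 < c) (hc₁ : c ≤ 1) (hε : 0 < ε)
    (hs : AvoidsNearRightAngles c (s : Set E))
    (hsep : (s : Set E).Pairwise fun p q => 2 * ε < dist p q) (ho : o ∈ s) (j : ℕ) :
    (#{p ∈ s | ⌊dist p o / (c * ε)⌋₊ = j} : ℝ) ≤ ((2 + c) / c) ^ Module.finrank ℝ E := by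
  have hcε : 0 < c * ε := mul_pos hc₀ hε
  have hshell : ∀ p ∈ {p ∈ s | ⌊dist p o / (c * ε)⌋₊ = j},
      j * (c * ε) ≤ dist p o ∧ dist p o < j * (c * ε) + c * ε := by
    intro p hp
    have := (Nat.floor_eq_iff (by positivity)).1 (Finset.mem_filter.1 hp).2
    rw [le_div_iff₀ hcε, div_lt_iff₀ hcε] at this
    constructor <;> linarith [this.1, this.2]
  rcases Nat.eq_zero_or_pos j with rfl | hj
  · have hsub : {p ∈ s | ⌊dist p o / (c * ε)⌋₊ = 0} ⊆ {o} := by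
      intro p hp
      by_contra hpo
      have hpo' := (hshell p hp).2
      rw [Nat.cast_zero, zero_mul, zero_add] at hpo'
      have := hsep (Finset.mem_filter.1 hp).1 ho (Finset.mem_singleton.not.1 hpo)
      linarith [mul_le_of_le_one_left hε.le hc₁]
    calc _ ≤ (1 : ℝ) := by
          exact_mod_cast (Finset.card_le_card hsub).trans (Finset.card_singleton o).le
      _ ≤ _ := one_le_pow₀ ((one_le_div hc₀).2 (by linarith))
  exact card_le_of_forall_mem_shell hc₀ hc₁ hε hs hsep ho (Finset.filter_subset _ s)
    (le_mul_of_one_le_left hcε.le (by exact_mod_cast hj)) hshell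

theorem card_le_of_avoidsNearRightAngles (hc₀ : 0 < c) (hc₁ : c ≤ 1) (hε : 0 < ε)
    (hs : AvoidsNearRightAngles c (s : Set E))
    (hsep : (s : Set E).Pairwise fun p q => 2 * ε < dist p q) (ho : o ∈ s) {D : ℝ}
    (hD : ↑s ⊆ closedBall o D) :
    (#s : ℝ) ≤ (D / (c * ε) + 1) * ((2 + c) / c) ^ Module.finrank ℝ E := by
  have hD₀ : 0 ≤ D := dist_self o ▸ mem_closedBall.1 (hD ho)
  have hmaps : (s : Set E).MapsTo (fun p => ⌊dist p o / (c * ε)⌋₊)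
      (Finset.range (⌊D / (c * ε)⌋₊ + 1)) := fun p hp =>
    Finset.mem_range.2 (Nat.lt_succ_of_le (Nat.floor_le_floor
      (div_le_div_of_nonneg_right (mem_closedBall.1 (hD hp)) (mul_pos hc₀ hε).le)))
  calc (#s : ℝ) = ∑ j ∈ Finset.range (⌊D / (c * ε)⌋₊ + 1),
        (#{p ∈ s | ⌊dist p o / (c * ε)⌋₊ = j} : ℝ) := by
        exact_mod_cast Finset.card_eq_sum_card_fiberwise hmaps
    _ ≤ (⌊D / (c * ε)⌋₊ + 1) * ((2 + c) / c) ^ Module.finrank ℝ E := by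
        simpa using Finset.sum_le_card_nsmul (Finset.range (⌊D / (c * ε)⌋₊ + 1)) _ _
          fun j _ => card_filter_floor_dist_div_eq_le hc₀ hc₁ hε hs hsep ho j
    _ ≤ _ := by gcongr; exact Nat.floor_le (by positivity)

theorem packNum_le_of_avoidsNearRightAngles {A : Set E} (hA : Bornology.IsBounded A)
    (hc₀ : 0 < c) (hc₁ : c ≤ 1) (hAc : AvoidsNearRightAngles c A) (hε : 0 < ε) :
    packNum A ε ≤
      ENNReal.ofReal ((diam A / (c * ε) + 1) * ((2 + c) / c) ^ Module.finrank ℝ E) := by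
  refine iSup₂_le fun S ⟨hSA, hSsep⟩ => ?_
  rcases S.eq_empty_or_nonempty with rfl | ⟨o, ho⟩
  · simp
  rw [← ENNReal.ofReal_natCast]
  exact ENNReal.ofReal_le_ofReal <| card_le_of_avoidsNearRightAngles hc₀ hc₁ hε
    (fun x hx y hy z hz => hAc x (hSA hx) y (hSA hy) z (hSA hz)) hSsep ho
    fun p hp => mem_closedBall.2 (dist_le_diam_of_mem hA (hSA hp) (hSA ho))

theorem upperMinkDim_le_one_of_avoidsNearRightAngles {A : Set E} (hA : Bornology.IsBounded A)
    (hc₀ : 0 < c) (hc₁ : c ≤ 1) (hAc : AvoidsNearRightAngles c A) : upperMinkDim A ≤ 1 := by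
  refine upperMinkDim_le_of_packNum_le zero_le_one
    (C := (diam A / c + 1) * ((2 + c) / c) ^ Module.finrank ℝ E) ?_
  filter_upwards [Ioo_mem_nhdsGT one_pos] with ε ⟨hε₀, hε₁⟩
  refine (packNum_le_of_avoidsNearRightAngles hA hc₀ hc₁ hAc hε₀).trans
    (ENNReal.ofReal_le_ofReal ?_)
  have : diam A / (c * ε) + 1 ≤ (diam A / c + 1) * ε⁻¹ := by
    rw [add_mul, one_mul, div_mul_eq_div_div, div_eq_mul_inv (diam A / c)]
    linarith [one_le_inv₀ hε₀ |>.2 hε₁.le]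
  rw [rpow_neg_one, mul_right_comm]
  gcongr

end Angles

theorem stmt12_general (n : ℕ) (A : Set (EuclideanSpace ℝ (Fin n)))
    (hbd : Bornology.IsBounded A) (hdim : 1 < upperMinkDim A) :
    ∀ ε : ℝ, 0 < ε → ∃ x ∈ A, ∃ y ∈ A, ∃ z ∈ A, x ≠ y ∧ x ≠ z ∧ y ≠ z ∧
      angle (y - x) (z - x) ∈ Set.Ioo (π / 2 - ε) (π / 2 + ε) := by
  intro ε hε
  by_contra! h
  set δ := min ε 1
  have hδ₀ : 0 < δ := lt_min hε one_pos
  have hδπ : δ < π := (min_le_right ε 1).trans_lt (by linarith [pi_gt_three])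
  have hA : AvoidsNearRightAngles (sin δ) A := fun x hx y hy z hz hxy hxz hyz =>
    sin_le_abs_cos_of_notMem_Ioo (angle_nonneg _ _) (angle_le_pi _ _) hδ₀.le fun hmem =>
      h x hx y hy z hz hxy hxz hyz <| Ioo_subset_Ioo (by linarith [min_le_left ε 1])
        (by linarith [min_le_left ε 1]) hmem
  exact (upperMinkDim_le_one_of_avoidsNearRightAngles hbd (sin_pos_of_pos_of_lt_pi hδ₀ hδπ)
    (sin_le_one δ) hA).not_gt hdim

theorem stmt12 (n : ℕ) (hn : 2 ≤ n) (A : Set (EuclideanSpace ℝ (Fin n)))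
    (hbd : Bornology.IsBounded A) (hdim : 1 < upperMinkDim A) :
    ∀ ε : ℝ, 0 < ε → ∃ x ∈ A, ∃ y ∈ A, ∃ z ∈ A, x ≠ y ∧ x ≠ z ∧ y ≠ z ∧
      angle (y - x) (z - x) ∈ Set.Ioo (π / 2 - ε) (π / 2 + ε) :=
  stmt12_general n A hbd hdim
end

section
/- Let K ⊂ ℝⁿ be a compact set with Hausdorff dimension greater than 1, and suppose the set D of unit direction vectors (x−y)/‖x−y‖ for distinct x, y ∈ K is closed. Then for every unit vector v ∈ S^{n−1} there exist distinct x, y ∈ K with ⟨x − y, v⟩ = 0. -/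
/-!
Suppose no pair of distinct points of `K` spans a direction perpendicular to `v`. The set of
directions is a closed subset of the unit sphere, hence compact, so it stays away from the
hyperplane `v⊥` and `|⟪x - y, v⟫| ≥ c ‖x - y‖` on `K` for some `c > 0`. The projection
`x ↦ ⟪x, v⟫` is then antilipschitz on `K`, which forces `dimH K ≤ dimH ℝ = 1`.
-/

open Set Metric

theorem dimH_le_one_of_forall_mul_dist_le {X : Type*} [MetricSpace X] {s : Set X} {f : X → ℝ}
    {c : ℝ} (hc : 0 < c) (h : ∀ x ∈ s, ∀ y ∈ s, c * dist x y ≤ dist (f x) (f y)) :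
    dimH s ≤ 1 := by
  have hanti : AntilipschitzWith (Real.toNNReal c)⁻¹ (s.domRestrict f) :=
    AntilipschitzWith.of_le_mul_dist fun x y => by
      rw [NNReal.coe_inv, Real.coe_toNNReal c hc.le, inv_mul_eq_div, le_div_iff₀ hc, mul_comm]
      exact h x x.2 y y.2
  calc dimH s = dimH (univ : Set s) := by
        rw [← isometry_subtype_coe.dimH_image (univ : Set s), image_univ, Subtype.range_coe]
    _ ≤ dimH (s.domRestrict f '' univ) := hanti.le_dimH_image univ
    _ ≤ dimH (univ : Set ℝ) := dimH_mono (subset_univ _)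
    _ = 1 := Real.dimH_univ

section InnerProductSpace

variable {E : Type*} [NormedAddCommGroup E] [InnerProductSpace ℝ E]

def directionSet (K : Set E) : Set E :=
  {d | ∃ x ∈ K, ∃ y ∈ K, x ≠ y ∧ d = ‖x - y‖⁻¹ • (x - y)}

theorem directionSet_subset_sphere (K : Set E) : directionSet K ⊆ sphere 0 1 := by
  rintro d ⟨x, -, y, -, hxy, rfl⟩
  rw [mem_sphere_zero_iff_norm, norm_smul, norm_inv, norm_norm,
    inv_mul_cancel₀ (norm_ne_zero_iff.mpr (sub_ne_zero.mpr hxy))]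

theorem exists_pos_le_abs_inner_directionSet [ProperSpace E] {K : Set E}
    (hD : IsClosed (directionSet K)) {v : E}
    (hv : ∀ x ∈ K, ∀ y ∈ K, x ≠ y → inner ℝ (x - y) v ≠ 0) :
    ∃ c, 0 < c ∧ ∀ d ∈ directionSet K, c ≤ |inner ℝ d v| := by
  have hcompact : IsCompact (directionSet K) :=
    (isCompact_sphere 0 1).of_isClosed_subset hD (directionSet_subset_sphere K)
  refine hcompact.exists_forall_le' (continuous_id.inner continuous_const).abs.continuousOn ?_
  rintro _ ⟨x, hx, y, hy, hxy, rfl⟩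
  rw [id_eq, real_inner_smul_left, abs_pos]
  exact mul_ne_zero (inv_ne_zero (norm_ne_zero_iff.mpr (sub_ne_zero.mpr hxy))) (hv x hx y hy hxy)

theorem mul_dist_le_abs_inner_sub {K : Set E} {v : E} {c : ℝ}
    (hc : ∀ d ∈ directionSet K, c ≤ |inner ℝ d v|) {x y : E} (hx : x ∈ K) (hy : y ∈ K) :
    c * dist x y ≤ |inner ℝ (x - y) v| := by
  rcases eq_or_ne x y with rfl | hxy
  · simp
  have hpos : 0 < ‖x - y‖ := norm_pos_iff.mpr (sub_ne_zero.mpr hxy)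
  have := hc _ ⟨x, hx, y, hy, hxy, rfl⟩
  rw [real_inner_smul_left, abs_mul, abs_inv, abs_norm, inv_mul_eq_div, le_div_iff₀ hpos] at this
  rwa [dist_eq_norm]

end InnerProductSpace

theorem stmt17_general (n : ℕ) (K : Set (EuclideanSpace ℝ (Fin n)))
    (hdim : 1 < dimH K)
    (hD : IsClosed {d : EuclideanSpace ℝ (Fin n) |
      ∃ x ∈ K, ∃ y ∈ K, x ≠ y ∧ d = ‖x - y‖⁻¹ • (x - y)}) :
    ∀ v : EuclideanSpace ℝ (Fin n), ‖v‖ = 1 →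
      ∃ x ∈ K, ∃ y ∈ K, x ≠ y ∧ inner ℝ (x - y) v = (0 : ℝ) := by
  intro v _
  by_contra! hperp
  obtain ⟨c, hc, hcD⟩ := exists_pos_le_abs_inner_directionSet (K := K) hD hperp
  refine hdim.not_ge (dimH_le_one_of_forall_mul_dist_le (f := fun x => inner ℝ x v) hc ?_)
  intro x hx y hy
  rw [Real.dist_eq, ← inner_sub_left]
  exact mul_dist_le_abs_inner_sub hcD hx hy

theorem stmt17 (n : ℕ) (K : Set (EuclideanSpace ℝ (Fin n))) (hK : IsCompact K)
    (hdim : 1 < dimH K)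
    (hD : IsClosed {d : EuclideanSpace ℝ (Fin n) |
      ∃ x ∈ K, ∃ y ∈ K, x ≠ y ∧ d = ‖x - y‖⁻¹ • (x - y)}) :
    ∀ v : EuclideanSpace ℝ (Fin n), ‖v‖ = 1 →
      ∃ x ∈ K, ∃ y ∈ K, x ≠ y ∧ inner ℝ (x - y) v = (0 : ℝ) :=
  stmt17_general n K hdim hD
end
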